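/- arXiv:1310.6467 — 4 statements merged into one kernel-verified Lean document; each statement's English description precedes it below -/
import Mathlib

section
/- For any fixed k ≥ 2, if gcd(m,q) = D and D is factored as D = d₁·d₂²·…·d_k^k with d₁,…,d_{k-1} squarefree and pairwise coprime, then every solution x of x^k ≡ m (mod q) is divisible by d₁d₂⋯d_k. -/
/-!
Since `gcd(m, q)` divides both `q` and `m`, it divides `x^k`. Splitting off the last factor,
`gcd(m, q) = A · d_k^k` with `A` a multiple of `a = d₁ ⋯ d_{k-1}`, which is squarefree as a product
of pairwise coprime squarefree numbers. From `a · d_k^k ∣ x^k` we first get `d_k ∣ x`; writing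
`x = d_k y` and cancelling leaves `a ∣ y^k`, hence `a ∣ y` because `a` is squarefree.
-/

theorem Squarefree.mul_dvd_of_mul_pow_dvd_pow {R : Type*} [CommMonoidWithZero R]
    [UniqueFactorizationMonoid R] {a b x : R} {n : ℕ} (ha : Squarefree a) (hn : n ≠ 0)
    (h : a * b ^ n ∣ x ^ n) : a * b ∣ x := by
  obtain ⟨y, rfl⟩ : b ∣ x :=
    (UniqueFactorizationMonoid.pow_dvd_pow_iff_dvd hn).mp ((dvd_mul_left _ _).trans h)
  rcases eq_or_ne b 0 with rfl | hb
  · simp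
  rw [mul_pow, mul_comm a, mul_dvd_mul_iff_left (pow_ne_zero n hb), ha.dvd_pow_iff_dvd hn] at h
  rw [mul_comm a]
  exact mul_dvd_mul_left b h

theorem Int.gcd_dvd_of_dvd_sub {m y : ℤ} {q : ℕ} (h : (q : ℤ) ∣ y - m) :
    (Int.gcd m q : ℤ) ∣ y := by
  simpa using ((Int.gcd_dvd_right m q).trans h).add (Int.gcd_dvd_left m q)

theorem divisibility_of_solutions_general (k : ℕ) (q : ℕ) (m : ℤ)
    (d : Fin k → ℕ) (hD : Int.gcd m q = ∏ i : Fin k, d i ^ ((i : ℕ) + 1))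
    (hsf : ∀ i : Fin k, (i : ℕ) + 1 < k → Squarefree (d i))
    (hcop : ∀ i j : Fin k, i ≠ j → (i : ℕ) + 1 < k → (j : ℕ) + 1 < k →
      Nat.Coprime (d i) (d j)) :
    ∀ x : ℤ, (q : ℤ) ∣ x ^ k - m → ((∏ i : Fin k, d i : ℕ) : ℤ) ∣ x := by
  intro x hx
  have hDx : Int.gcd m q ∣ x.natAbs ^ k := by
    rw [← Int.natAbs_pow, ← Int.natCast_dvd]
    exact Int.gcd_dvd_of_dvd_sub hx
  rw [Int.natCast_dvd]
  cases k with
  | zero => simp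
  | succ n =>
    rw [hD, Fin.prod_univ_castSucc] at hDx
    rw [Fin.prod_univ_castSucc]
    have hsq : Squarefree (∏ i : Fin n, d i.castSucc) :=
      Finset.squarefree_prod_of_pairwise_isCoprime
        (fun i _ j _ hij => Nat.coprime_iff_isRelPrime.mp
          (hcop _ _ (by simpa using hij) (by simp) (by simp)))
        fun i _ => hsf _ (by simp)
    have hdvd : ∏ i : Fin n, d i.castSucc ∣ ∏ i : Fin n, d i.castSucc ^ ((i : ℕ) + 1) :=
      Finset.prod_dvd_prod_of_dvd _ _ fun i _ => dvd_pow_self _ (by simp)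
    exact hsq.mul_dvd_of_mul_pow_dvd_pow n.succ_ne_zero
      ((Nat.mul_dvd_mul_right hdvd _).trans (by simpa using hDx))

/-- If `gcd(m,q) = D = d₁ d₂² ⋯ d_k^k` with `d₁,…,d_{k-1}` squarefree and pairwise
coprime, then every solution of `x^k ≡ m (mod q)` is divisible by `d₁ d₂ ⋯ d_k`. -/
theorem divisibility_of_solutions (k : ℕ) (hk : 2 ≤ k) (q : ℕ) (hq : 1 ≤ q) (m : ℤ)
    (d : Fin k → ℕ) (hD : Int.gcd m q = ∏ i : Fin k, d i ^ ((i : ℕ) + 1))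
    (hsf : ∀ i : Fin k, (i : ℕ) + 1 < k → Squarefree (d i))
    (hcop : ∀ i j : Fin k, i ≠ j → (i : ℕ) + 1 < k → (j : ℕ) + 1 < k →
      Nat.Coprime (d i) (d j)) :
    ∀ x : ℤ, (q : ℤ) ∣ x ^ k - m → ((∏ i : Fin k, d i : ℕ) : ℤ) ∣ x :=
  divisibility_of_solutions_general k q m d hD hsf hcop
end

section
/- For an integer n ≠ 0 and x ≠ 0 with |x| ≤ P, let R(n,x) be the number of pairs (y,z) with |y|,|z| ≤ P and x(xy+z²) = n. Then ∑_{0<|n|≪P³} (∑_{x | n, |x|≤P} R(n,x))² ≪ P^{3+ε}. -/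
/-!
For fixed `n` the admissible `x` are divisors of `n`, so for every `δ > 0` there are `≪ P^δ` of
them by the divisor bound, and Cauchy–Schwarz reduces the sum to
`P^δ ∑_x #{(y,z,y',z') : x(xy+z²) = x(xy'+z'²)}`.
Such a collision is determined by `(z, z', y')` and forces `x ∣ z'² - z²`. Summing over `x`, the
pairs with `z'² = z²` contribute `O(P³)`, and the others `O(P^(3+δ))` by the divisor bound again.
-/

open Finset

lemma add_one_le_mul_pow_of_one_add_le {t y : ℝ} (ht : 0 < t) (hy : 1 + t ≤ y) (a : ℕ) :
    (a + 1 : ℝ) ≤ (1 + 1 / t) * y ^ a := by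
  have bernoulli : 1 + a * t ≤ y ^ a :=
    (one_add_mul_le_pow (by linarith) a).trans (pow_le_pow_left₀ (by linarith) hy a)
  have key : (a + 1 : ℝ) ≤ (1 + 1 / t) * (1 + a * t) := calc
    (a + 1 : ℝ) ≤ a + 1 + (a * t + 1 / t) := le_add_of_nonneg_right (by positivity)
    _ = (1 + 1 / t) * (1 + a * t) := by field_simp; ring
  exact key.trans (mul_le_mul_of_nonneg_left bernoulli (by positivity))

lemma add_one_le_mul_rpow_pow {δ : ℝ} (hδ : 0 < δ) {p : ℕ} (hp : 2 ≤ p) (a : ℕ) :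
    (a + 1 : ℝ) ≤
      (if p < ⌈(2 : ℝ) ^ (1 / δ)⌉₊ then 1 + 1 / (2 ^ δ - 1) else 1) * ((p : ℝ) ^ δ) ^ a := by
  have hp' : (2 : ℝ) ≤ p := by exact_mod_cast hp
  split_ifs with hsmall
  · refine add_one_le_mul_pow_of_one_add_le (by simpa using Real.one_lt_rpow (by norm_num) hδ) ?_ a
    rw [add_sub_cancel]
    exact Real.rpow_le_rpow (by norm_num) hp' hδ.le
  · have hbig : (2 : ℝ) ^ (1 / δ) ≤ p := Nat.ceil_le.mp (not_lt.mp hsmall)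
    have h2 : (2 : ℝ) ≤ (p : ℝ) ^ δ := by
      calc (2 : ℝ) = ((2 : ℝ) ^ (1 / δ)) ^ δ := by
            rw [← Real.rpow_mul (by norm_num), one_div_mul_cancel hδ.ne', Real.rpow_one]
        _ ≤ (p : ℝ) ^ δ := Real.rpow_le_rpow (by positivity) hbig hδ.le
    calc (a + 1 : ℝ) ≤ 2 ^ a := by exact_mod_cast Nat.lt_two_pow_self
      _ ≤ ((p : ℝ) ^ δ) ^ a := pow_le_pow_left₀ (by norm_num) h2 a
      _ = 1 * ((p : ℝ) ^ δ) ^ a := (one_mul _).symm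

lemma Nat.rpow_eq_prod_primeFactors {n : ℕ} (hn : n ≠ 0) (δ : ℝ) :
    (n : ℝ) ^ δ = ∏ p ∈ n.primeFactors, ((p : ℝ) ^ δ) ^ n.factorization p := by
  conv_lhs => rw [← Nat.prod_factorization_pow_eq_self hn]
  rw [Nat.prod_factorization_eq_prod_primeFactors, Nat.cast_prod,
    ← Real.finsetProd_rpow _ _ fun p _ => by positivity]
  refine prod_congr rfl fun p _ => ?_
  rw [Nat.cast_pow, Real.rpow_pow_comm (Nat.cast_nonneg p)]

theorem Nat.card_divisors_le_mul_rpow {δ : ℝ} (hδ : 0 < δ) :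
    ∃ B : ℝ, 1 ≤ B ∧ ∀ n : ℕ, n ≠ 0 → (#n.divisors : ℝ) ≤ B * (n : ℝ) ^ δ := by
  set N := ⌈(2 : ℝ) ^ (1 / δ)⌉₊
  set M : ℝ := 1 + 1 / (2 ^ δ - 1)
  have hM : 1 ≤ M := le_add_of_nonneg_right
    (one_div_nonneg.mpr (sub_nonneg.mpr (Real.one_le_rpow (by norm_num) hδ.le)))
  refine ⟨M ^ N, one_le_pow₀ hM, fun n hn => ?_⟩
  have hsmall : ∏ p ∈ n.primeFactors, (if p < N then M else 1) ≤ M ^ N := by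
    rw [prod_ite, prod_const, prod_const_one, mul_one]
    refine pow_le_pow_right₀ hM ((card_le_card fun p hp => ?_).trans (card_range N).le)
    exact mem_range.mpr (mem_filter.mp hp).2
  calc (#n.divisors : ℝ) = ∏ p ∈ n.primeFactors, ((n.factorization p : ℝ) + 1) := by
        rw [Nat.card_divisors hn]; push_cast; rfl
    _ ≤ ∏ p ∈ n.primeFactors, ((if p < N then M else 1) * ((p : ℝ) ^ δ) ^ n.factorization p) :=
        prod_le_prod (fun _ _ => by positivity) fun p hp =>
          add_one_le_mul_rpow_pow hδ (Nat.prime_of_mem_primeFactors hp).two_le _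
    _ ≤ M ^ N * (n : ℝ) ^ δ := by
        rw [prod_mul_distrib, ← Nat.rpow_eq_prod_primeFactors hn]
        exact mul_le_mul_of_nonneg_right hsmall (by positivity)

lemma Int.card_filter_dvd_le_card_divisors (s : Finset ℤ) {m : ℤ} (hm : m ≠ 0) :
    #(s.filter (· ∣ m)) ≤ #m.divisors :=
  card_le_card fun _ hx => Int.mem_divisors.mpr ⟨(mem_filter.mp hx).2, hm⟩

lemma Int.card_divisors (z : ℤ) : #z.divisors = 2 * #z.natAbs.divisors := by
  rw [Int.divisors, card_disjUnion, card_map, card_map, two_mul]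

theorem Int.card_divisors_le_mul_rpow {δ : ℝ} (hδ : 0 < δ) :
    ∃ B : ℝ, 1 ≤ B ∧ ∀ m : ℤ, (#m.divisors : ℝ) ≤ B * |(m : ℝ)| ^ δ := by
  obtain ⟨B, hB, hdiv⟩ := Nat.card_divisors_le_mul_rpow hδ
  refine ⟨2 * B, by linarith, fun m => ?_⟩
  rcases eq_or_ne m 0 with rfl | hm
  · simp [Real.zero_rpow hδ.ne']
  rw [Int.card_divisors, Nat.cast_mul, Nat.cast_two, mul_assoc, ← Int.cast_abs,
    ← Int.natCast_natAbs, Int.cast_natCast]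
  exact mul_le_mul_of_nonneg_left (hdiv _ (Int.natAbs_ne_zero.mpr hm)) two_pos.le

section Collisions

variable {ι α β : Type*} [DecidableEq β]

lemma sum_sq_card_fiber_le_card_collisions (T : Finset α) (f : α → β) (A : Finset β) :
    ∑ n ∈ A, #(T.filter (fun a => f a = n)) ^ 2 ≤ #((T ×ˢ T).filter (fun w => f w.1 = f w.2)) := by
  set fiber := fun n => T.filter (fun a => f a = n)
  have hdisj : (A : Set β).PairwiseDisjoint fun n => fiber n ×ˢ fiber n := by
    intro n _ m _ hnm
    refine disjoint_left.mpr fun w hn hm => hnm ?_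
    simp only [fiber, mem_product, mem_filter] at hn hm
    rw [← hn.1.2, hm.1.2]
  have hsub : A.disjiUnion (fun n => fiber n ×ˢ fiber n) hdisj ⊆
      (T ×ˢ T).filter (fun w => f w.1 = f w.2) := by
    intro w hw
    obtain ⟨n, -, hw⟩ := mem_disjiUnion.mp hw
    simp only [fiber, mem_product, mem_filter] at hw ⊢
    exact ⟨⟨hw.1.1, hw.2.1⟩, hw.1.2.trans hw.2.2.symm⟩
  calc ∑ n ∈ A, #(fiber n) ^ 2 = #(A.disjiUnion (fun n => fiber n ×ˢ fiber n) hdisj) := by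
        rw [card_disjiUnion]; simp only [card_product, sq]
    _ ≤ _ := card_le_card hsub

lemma sum_sq_sum_le_mul_sum_card_collisions (s : Finset ι) (T : Finset α) (f : ι → α → β)
    (A : Finset β) (p : β → ι → Prop) [∀ n, DecidablePred (p n)] {D : ℝ} (hD : 0 ≤ D)
    (hA : ∀ n ∈ A, (#(s.filter (p n)) : ℝ) ≤ D) :
    ∑ n ∈ A, (∑ x ∈ s.filter (p n), (#(T.filter (fun a => f x a = n)) : ℝ)) ^ 2 ≤
      D * ∑ x ∈ s, (#((T ×ˢ T).filter (fun w => f x w.1 = f x w.2)) : ℝ) := by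
  set r := fun n x => (#(T.filter (fun a => f x a = n)) : ℝ)
  have cauchy_schwarz : ∀ n ∈ A, (∑ x ∈ s.filter (p n), r n x) ^ 2 ≤ D * ∑ x ∈ s, r n x ^ 2 :=
    fun n hn => sq_sum_le_card_mul_sum_sq.trans <| mul_le_mul (hA n hn)
      (sum_le_sum_of_subset_of_nonneg (filter_subset _ _) fun _ _ _ => sq_nonneg _)
      (sum_nonneg fun _ _ => sq_nonneg _) hD
  calc _ ≤ ∑ n ∈ A, D * ∑ x ∈ s, r n x ^ 2 := sum_le_sum cauchy_schwarz
    _ = D * ∑ x ∈ s, ∑ n ∈ A, r n x ^ 2 := by rw [← mul_sum, sum_comm]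
    _ ≤ _ := by
        refine mul_le_mul_of_nonneg_left (sum_le_sum fun x _ => ?_) hD
        simp only [r]
        exact_mod_cast sum_sq_card_fiber_le_card_collisions T (f x) A

end Collisions

lemma card_collisions_le (B : Finset ℤ) {x : ℤ} (hx : x ≠ 0) :
    #(((B ×ˢ B) ×ˢ (B ×ˢ B)).filter
        (fun w => x * (x * w.1.1 + w.1.2 ^ 2) = x * (x * w.2.1 + w.2.2 ^ 2))) ≤
      #((B ×ˢ B).filter (fun z => x ∣ z.2 ^ 2 - z.1 ^ 2)) * #B := by
  rw [← card_product]
  refine card_le_card_of_injOn (fun w => ((w.1.2, w.2.2), w.2.1)) ?_ ?_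
  · intro w hw
    simp only [mem_coe, mem_filter, mem_product] at hw
    obtain ⟨⟨⟨-, hz⟩, hy', hz'⟩, h⟩ := hw
    simp only [mem_coe, mem_product, mem_filter]
    refine ⟨⟨⟨hz, hz'⟩, w.1.1 - w.2.1, ?_⟩, hy'⟩
    linear_combination -(mul_left_cancel₀ hx h)
  · intro w hw w' hw' h
    simp only [mem_coe, mem_filter, mem_product] at hw hw'
    simp only [Prod.mk.injEq] at h
    obtain ⟨⟨hz, hz'⟩, hy'⟩ := h
    have hy : x * w.1.1 = x * w'.1.1 := by
      linear_combination mul_left_cancel₀ hx hw.2 - mul_left_cancel₀ hx hw'.2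
        - (w.1.2 + w'.1.2) * hz + (w.2.2 + w'.2.2) * hz' + x * hy'
    exact Prod.ext (Prod.ext (mul_left_cancel₀ hx hy) hz) (Prod.ext hy' hz')

lemma card_filter_sq_sub_sq_eq_zero_le (B : Finset ℤ) :
    #((B ×ˢ B).filter (fun z => z.2 ^ 2 - z.1 ^ 2 = 0)) ≤ 2 * #B := by
  have hsub : (B ×ˢ B).filter (fun z => z.2 ^ 2 - z.1 ^ 2 = 0) ⊆
      (B ×ˢ ({1, -1} : Finset ℤ)).image fun zs => (zs.1, zs.2 * zs.1) := by
    intro z hz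
    simp only [mem_filter, mem_product] at hz
    have : (z.2 - z.1) * (z.2 + z.1) = 0 := by linear_combination hz.2
    rcases mul_eq_zero.mp this with h | h
    · exact mem_image.mpr ⟨(z.1, 1), by simp [hz.1.1], by ext <;> simp; linarith⟩
    · exact mem_image.mpr ⟨(z.1, -1), by simp [hz.1.1], by ext <;> simp; linarith⟩
  calc _ ≤ _ := card_le_card hsub
    _ ≤ #(B ×ˢ ({1, -1} : Finset ℤ)) := card_image_le
    _ = 2 * #B := by rw [card_product, mul_comm]; rfl

lemma sum_card_filter_dvd_le {τ : Type*} (s : Finset ℤ) (U : Finset τ) (g : τ → ℤ) {D : ℝ}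
    (hD₀ : 0 ≤ D) (hD : ∀ t ∈ U, g t ≠ 0 → (#(s.filter (· ∣ g t)) : ℝ) ≤ D) :
    ∑ x ∈ s, (#(U.filter (fun t => x ∣ g t)) : ℝ) ≤
      #s * #(U.filter (fun t => g t = 0)) + #U * D := by
  have swap : ∑ x ∈ s, #(U.filter (fun t => x ∣ g t)) = ∑ t ∈ U, #(s.filter (· ∣ g t)) := by
    simp only [card_filter]; exact sum_comm
  have per_term : ∀ t ∈ U, (#(s.filter (· ∣ g t)) : ℝ) ≤ (if g t = 0 then (#s : ℝ) else 0) + D := by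
    intro t ht
    split_ifs with h
    · exact le_add_of_le_of_nonneg (by exact_mod_cast card_filter_le _ _) hD₀
    · rw [zero_add]; exact hD t ht h
  calc ∑ x ∈ s, (#(U.filter (fun t => x ∣ g t)) : ℝ) = ∑ t ∈ U, (#(s.filter (· ∣ g t)) : ℝ) := by
        exact_mod_cast swap
    _ ≤ ∑ t ∈ U, ((if g t = 0 then (#s : ℝ) else 0) + D) := sum_le_sum per_term
    _ = _ := by rw [sum_add_distrib, ← sum_filter, sum_const, sum_const, nsmul_eq_mul, nsmul_eq_mul,
        mul_comm (#(U.filter _) : ℝ)]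

theorem sum_sq_sum_card_repr_le (B s A : Finset ℤ) (hs : 0 ∉ s) {D : ℝ} (hD₀ : 0 ≤ D)
    (hA : ∀ n ∈ A, (#(s.filter (· ∣ n)) : ℝ) ≤ D)
    (hB : ∀ z ∈ B ×ˢ B, z.2 ^ 2 - z.1 ^ 2 ≠ 0 → (#(s.filter (· ∣ z.2 ^ 2 - z.1 ^ 2)) : ℝ) ≤ D) :
    ∑ n ∈ A, (∑ x ∈ s.filter (· ∣ n),
        (#((B ×ˢ B).filter (fun yz => x * (x * yz.1 + yz.2 ^ 2) = n)) : ℝ)) ^ 2 ≤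
      D * #B * (2 * #s * #B + #B ^ 2 * D) := by
  calc _ ≤ D * ∑ x ∈ s, (#(((B ×ˢ B) ×ˢ (B ×ˢ B)).filter
          (fun w => x * (x * w.1.1 + w.1.2 ^ 2) = x * (x * w.2.1 + w.2.2 ^ 2))) : ℝ) :=
        sum_sq_sum_le_mul_sum_card_collisions s (B ×ˢ B) (fun x yz => x * (x * yz.1 + yz.2 ^ 2))
          A (fun n x => x ∣ n) hD₀ hA
    _ ≤ D * ∑ x ∈ s, (#((B ×ˢ B).filter (fun z => x ∣ z.2 ^ 2 - z.1 ^ 2)) : ℝ) * #B := by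
        gcongr with x hx
        exact_mod_cast card_collisions_le B (ne_of_mem_of_not_mem hx hs)
    _ = D * #B * ∑ x ∈ s, (#((B ×ˢ B).filter (fun z => x ∣ z.2 ^ 2 - z.1 ^ 2)) : ℝ) := by
        rw [← sum_mul]; ring
    _ ≤ D * #B * (#s * #((B ×ˢ B).filter (fun z => z.2 ^ 2 - z.1 ^ 2 = 0)) + #(B ×ˢ B) * D) := by
        gcongr
        exact sum_card_filter_dvd_le s (B ×ˢ B) (fun z => z.2 ^ 2 - z.1 ^ 2) hD₀ hB
    _ ≤ D * #B * (#s * (2 * #B) + #B ^ 2 * D) := by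
        rw [card_product, Nat.cast_mul, ← sq]
        gcongr
        exact_mod_cast card_filter_sq_sub_sq_eq_zero_le B
    _ = D * #B * (2 * #s * #B + #B ^ 2 * D) := by ring

theorem sum_sq_sum_card_repr_Icc_le {P : ℕ} (hP : 1 ≤ P) {N : ℤ} {M D : ℝ} (hD : 1 ≤ D)
    (hNM : (N : ℝ) ≤ M) (hPM : (P : ℝ) ^ 2 ≤ M)
    (hdvd : ∀ m : ℤ, m ≠ 0 → |(m : ℝ)| ≤ M →
      (#(((Icc (-(P : ℤ)) P).erase 0).filter (· ∣ m)) : ℝ) ≤ D) :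
    ∑ n ∈ (Icc (-N) N).erase 0, (∑ x ∈ ((Icc (-(P : ℤ)) P).erase 0).filter (· ∣ n),
        (#((Icc (-(P : ℤ)) P ×ˢ Icc (-(P : ℤ)) P).filter
          (fun yz => x * (x * yz.1 + yz.2 ^ 2) = n)) : ℝ)) ^ 2 ≤ 63 * P ^ 3 * D ^ 2 := by
  set I := Icc (-(P : ℤ)) P
  have hn : ∀ n ∈ (Icc (-N) N).erase 0, n ≠ 0 ∧ |(n : ℝ)| ≤ M := by
    intro n hn
    obtain ⟨hn0, hnN⟩ := mem_erase.mp hn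
    have : |(n : ℝ)| ≤ N := by exact_mod_cast abs_le.mpr (mem_Icc.mp hnN)
    exact ⟨hn0, this.trans hNM⟩
  have hsq : ∀ z ∈ I ×ˢ I, |((z.2 ^ 2 - z.1 ^ 2 : ℤ) : ℝ)| ≤ M := by
    intro z hz
    obtain ⟨h1, h2⟩ := mem_product.mp hz
    rw [mem_Icc] at h1 h2
    have : |z.2 ^ 2 - z.1 ^ 2| ≤ (P : ℤ) ^ 2 := abs_le.mpr ⟨by nlinarith, by nlinarith⟩
    exact le_trans (by exact_mod_cast this) hPM
  have hcard : #I = 2 * P + 1 := by rw [Int.card_Icc]; omega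
  have hP1 : (1 : ℝ) ≤ P := by exact_mod_cast hP
  calc _ ≤ D * #I * (2 * #(I.erase 0) * #I + #I ^ 2 * D) :=
        sum_sq_sum_card_repr_le I _ _ (notMem_erase 0 I) (by linarith)
          (fun n h => hdvd n (hn n h).1 (hn n h).2) fun z hz hz0 => hdvd _ hz0 (hsq z hz)
    _ = D * (2 * P + 1) * (2 * (2 * P) * (2 * P + 1) + (2 * P + 1) ^ 2 * D) := by
        rw [card_erase_of_mem (by simp [I]), hcard]; push_cast; ring
    _ ≤ D * (3 * P) * (2 * (2 * P) * (3 * P) + (3 * P) ^ 2 * D) := by gcongr <;> linarith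
    _ = 36 * P ^ 3 * D + 27 * P ^ 3 * D ^ 2 := by ring
    _ ≤ 63 * P ^ 3 * D ^ 2 := by
        have : P ^ 3 * D ≤ P ^ 3 * D ^ 2 := by gcongr; nlinarith
        linarith

/-- With `R(n,x)` the number of pairs `(y,z)` in `[-P,P]²` with `x(xy+z²) = n`,
one has `∑_{0<|n|≤CP³} (∑_{x∣n, 0<|x|≤P} R(n,x))² ≪ P^(3+ε)`. -/
theorem sum_of_squared_representation_counts (C : ℝ) (hC : 0 < C) :
    ∀ ε : ℝ, 0 < ε → ∃ K : ℝ, 0 < K ∧ ∀ P : ℕ, 1 ≤ P →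
      (((Finset.Icc (-(⌈C * (P : ℝ) ^ 3⌉ : ℤ)) ⌈C * (P : ℝ) ^ 3⌉).erase 0).sum
          (fun n : ℤ =>
            ((((Finset.Icc (-(P : ℤ)) P).erase 0).filter (fun x : ℤ => x ∣ n)).sum
                (fun x : ℤ =>
                  ((Finset.filter
                      (fun yz : ℤ × ℤ => x * (x * yz.1 + yz.2 ^ 2) = n)
                      (Finset.Icc (-(P : ℤ)) P ×ˢ Finset.Icc (-(P : ℤ)) P)).card : ℝ)))
              ^ 2))
        ≤ K * (P : ℝ) ^ ((3 : ℝ) + ε) := by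
  intro ε hε
  obtain ⟨B, hB, hdiv⟩ := Int.card_divisors_le_mul_rpow (δ := ε / 6) (by positivity)
  refine ⟨63 * B ^ 2 * (C + 1) ^ (ε / 3), by positivity, fun P hP => ?_⟩
  have hP1 : (1 : ℝ) ≤ P := by exact_mod_cast hP
  have hP3 : (1 : ℝ) ≤ P ^ 3 := one_le_pow₀ hP1
  set M := (C + 1) * (P : ℝ) ^ 3
  have hM : 1 ≤ M := one_le_mul_of_one_le_of_one_le (by linarith) hP3
  have hNM : (⌈C * (P : ℝ) ^ 3⌉ : ℝ) ≤ M := by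
    linarith [Int.ceil_lt_add_one (C * (P : ℝ) ^ 3)]
  have hPM : (P : ℝ) ^ 2 ≤ M := calc
    (P : ℝ) ^ 2 ≤ P ^ 3 := pow_le_pow_right₀ hP1 (by norm_num)
    _ ≤ M := le_mul_of_one_le_left (by positivity) (by linarith)
  have hdvd (s : Finset ℤ) (m : ℤ) (hm : m ≠ 0) (hmM : |(m : ℝ)| ≤ M) :
      (#(s.filter (· ∣ m)) : ℝ) ≤ B * M ^ (ε / 6) := calc
    (#(s.filter (· ∣ m)) : ℝ) ≤ #m.divisors := by
      exact_mod_cast Int.card_filter_dvd_le_card_divisors s hm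
    _ ≤ B * |(m : ℝ)| ^ (ε / 6) := hdiv m
    _ ≤ B * M ^ (ε / 6) := by gcongr
  calc _ ≤ 63 * P ^ 3 * (B * M ^ (ε / 6)) ^ 2 :=
        sum_sq_sum_card_repr_Icc_le hP
          (one_le_mul_of_one_le_of_one_le hB (Real.one_le_rpow hM (by positivity))) hNM hPM
          (hdvd _)
    _ = 63 * B ^ 2 * (C + 1) ^ (ε / 3) * (P : ℝ) ^ ((3 : ℝ) + ε) := by
        rw [mul_pow, ← Real.rpow_mul_natCast (by positivity),
          Real.mul_rpow (by positivity) (by positivity), ← Real.rpow_natCast_mul (by positivity),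
          Real.rpow_add (by positivity)]
        norm_num; ring_nf
end

section
/- Let F₁(α) = ∑ e(α·x(xy+z²)), where the sum is over integer triples (x,y,z) with |x|,|y|,|z| ≤ P and x(xy+z²) ≠ 0. Then ∫₀¹ |F₁(α)|² dα ≪ P^{3+ε}. -/
/-!
By Parseval the integral counts the pairs of triples in the box with
`x(xy+z²) = x'(x'y'+z'²) ≠ 0`. Grouping triples by `(x, xy+z²)`, whose product is the value of
the form, Cauchy–Schwarz bounds this count by the number of factorizations of a nonzero value
`≪ P³` (at most its number of divisors, `≪ P^ε`) times the number of pairs with `x = x'` and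
`xy+z² = x'y'+z'²`. Such a pair is determined by `y, z, z'` and a divisor `x` of `z² - z'²`:
there are `≪ P^ε` choices of `x` when `z² ≠ z'²`, and only `O(P)` pairs `(z, z')` have
`z² = z'²`, so there are `≪ P^(3+ε)` such pairs.

The divisor bound `d(n) ≪ n^δ` follows from `d(n)^k ≤ C_k n`, comparing `(a + 1)^k` with `p^a`
prime by prime.
-/

open Finset Complex
open scoped Real

namespace Nat

theorem succ_pow_le_pow_mul_two_pow {k : ℕ} (hk : 0 < k) (a : ℕ) :
    (a + 1) ^ k ≤ k ^ k * 2 ^ a :=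
  calc (a + 1) ^ k ≤ (k * 2 ^ (a / k)) ^ k := by
        gcongr
        calc a + 1 ≤ k * (a / k + 1) := Nat.lt_mul_div_succ a hk
          _ ≤ k * 2 ^ (a / k) := Nat.mul_le_mul_left _ (Nat.lt_two_pow_self)
    _ = k ^ k * 2 ^ (a / k * k) := by rw [mul_pow, ← pow_mul]
    _ ≤ k ^ k * 2 ^ a := by gcongr; exacts [one_le_two, Nat.div_mul_le_self a k]

/-- Only primes `p < 2 ^ k` cost a constant factor: otherwise
`(a + 1) ^ k ≤ 2 ^ (a k) ≤ p ^ a`. -/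
theorem succ_pow_le_ite_mul_pow {k p : ℕ} (hk : 0 < k) (hp : 2 ≤ p) (a : ℕ) :
    (a + 1) ^ k ≤ (if p < 2 ^ k then k ^ k else 1) * p ^ a := by
  split_ifs with hpk
  · calc (a + 1) ^ k ≤ k ^ k * 2 ^ a := succ_pow_le_pow_mul_two_pow hk a
      _ ≤ k ^ k * p ^ a := by gcongr
  · calc (a + 1) ^ k ≤ (2 ^ a) ^ k := Nat.pow_le_pow_left (Nat.lt_two_pow_self) k
      _ = (2 ^ k) ^ a := by rw [← pow_mul, ← pow_mul, mul_comm]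
      _ ≤ 1 * p ^ a := by rw [one_mul]; exact Nat.pow_le_pow_left (not_lt.mp hpk) a

theorem card_divisors_pow_le {k : ℕ} (hk : 0 < k) {n : ℕ} (hn : n ≠ 0) :
    #n.divisors ^ k ≤ (k ^ k) ^ 2 ^ k * n := by
  have hsmall : ∏ p ∈ n.primeFactors, (if p < 2 ^ k then k ^ k else 1) ≤ (k ^ k) ^ 2 ^ k := by
    rw [← prod_filter, prod_const]
    refine Nat.pow_le_pow_right (by positivity) ?_
    exact (card_le_card fun p hp => mem_range.mpr (mem_filter.mp hp).2).trans_eq (card_range _)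
  calc #n.divisors ^ k = ∏ p ∈ n.primeFactors, (n.factorization p + 1) ^ k := by
        rw [Nat.card_divisors hn, prod_pow]
    _ ≤ ∏ p ∈ n.primeFactors, (if p < 2 ^ k then k ^ k else 1) * p ^ n.factorization p :=
        prod_le_prod' fun p hp =>
          succ_pow_le_ite_mul_pow hk (prime_of_mem_primeFactors hp).two_le _
    _ = (∏ p ∈ n.primeFactors, (if p < 2 ^ k then k ^ k else 1)) * n := by
        rw [prod_mul_distrib, ← Nat.prod_primeFactors_pow_factorization hn]
    _ ≤ (k ^ k) ^ 2 ^ k * n := Nat.mul_le_mul_right n hsmall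

theorem card_divisors_le_rpow {δ : ℝ} (hδ : 0 < δ) :
    ∃ C : ℝ, 0 < C ∧ ∀ n : ℕ, n ≠ 0 → (#n.divisors : ℝ) ≤ C * (n : ℝ) ^ δ := by
  obtain ⟨k, hk⟩ : ∃ k : ℕ, 1 / δ ≤ k := exists_nat_ge _
  have hk0 : 0 < k := by exact_mod_cast (one_div_pos.mpr hδ).trans_le hk
  have hkδ : 1 ≤ k * δ := by rwa [div_le_iff₀ hδ] at hk
  set C : ℕ := (k ^ k) ^ 2 ^ k
  have hC : (1 : ℝ) ≤ C := by exact_mod_cast Nat.one_le_iff_ne_zero.mpr (by positivity)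
  refine ⟨C, by linarith, fun n hn => ?_⟩
  have hn1 : (1 : ℝ) ≤ n := by exact_mod_cast Nat.one_le_iff_ne_zero.mpr hn
  refine le_of_pow_le_pow_left₀ hk0.ne' (by positivity) ?_
  calc (#n.divisors : ℝ) ^ k ≤ C * n := by exact_mod_cast card_divisors_pow_le hk0 hn
    _ ≤ C ^ k * (n : ℝ) ^ (k * δ) := by
        gcongr
        · exact le_self_pow₀ hC hk0.ne'
        · simpa using Real.rpow_le_rpow_of_exponent_le hn1 hkδ
    _ = (C * (n : ℝ) ^ δ) ^ k := by
        rw [mul_pow, mul_comm (k : ℝ), Real.rpow_mul_natCast (by positivity)]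

end Nat

theorem Int.card_divisors_s4 (m : ℤ) : #m.divisors = 2 * #m.natAbs.divisors := by
  rw [Int.divisors, card_disjUnion, card_map, card_map, two_mul]

theorem Int.card_divisors_le_rpow {δ : ℝ} (hδ : 0 < δ) :
    ∃ C : ℝ, 0 < C ∧ ∀ m : ℤ, m ≠ 0 → (#m.divisors : ℝ) ≤ C * |(m : ℝ)| ^ δ := by
  obtain ⟨C, hC, hdiv⟩ := Nat.card_divisors_le_rpow hδ
  refine ⟨2 * C, by positivity, fun m hm => ?_⟩
  rw [Int.card_divisors_s4, Nat.cast_mul, Nat.cast_two, mul_assoc, ← Int.cast_abs,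
    ← Nat.cast_natAbs]
  gcongr
  exact hdiv _ (Int.natAbs_ne_zero.mpr hm)

theorem integral_exp_two_pi_I_mul_int (m : ℤ) :
    ∫ α in (0 : ℝ)..1, exp (2 * π * I * α * m) = if m = 0 then 1 else 0 := by
  split_ifs with hm
  · simp [hm]
  have hc : 2 * π * I * m ≠ 0 := by simp [hm, Real.pi_ne_zero]
  have hrw (α : ℝ) : 2 * π * I * α * m = 2 * π * I * m * α := by ring
  simp_rw [hrw]
  rw [integral_exp_mul_complex hc, ofReal_one, ofReal_zero, mul_zero, exp_zero, mul_one,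
    show 2 * π * I * m = m * (2 * π * I) by ring, exp_int_mul_two_pi_mul_I, sub_self, zero_div]

theorem exp_mul_conj_exp (a b : ℤ) (α : ℝ) :
    exp (2 * π * I * α * a) * starRingEnd ℂ (exp (2 * π * I * α * b))
      = exp (2 * π * I * α * (a - b : ℤ)) := by
  rw [← exp_conj, ← exp_add]
  congr 1
  simp only [map_mul, conj_I, conj_ofReal, map_ofNat, map_intCast]
  push_cast
  ring

theorem integral_norm_sq_sum_exp {ι : Type*} (s : Finset ι) (F : ι → ℤ) :
    ∫ α in (0 : ℝ)..1, ‖∑ t ∈ s, exp (2 * π * I * α * (F t : ℂ))‖ ^ 2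
      = #((s ×ˢ s).filter fun q => F q.1 = F q.2) := by
  have hexpand (α : ℝ) : ((‖∑ t ∈ s, exp (2 * π * I * α * (F t : ℂ))‖ ^ 2 : ℝ) : ℂ)
      = ∑ q ∈ s ×ˢ s, exp (2 * π * I * α * (F q.1 - F q.2 : ℤ)) := by
    rw [ofReal_pow, ← mul_conj', map_sum, sum_mul_sum, ← sum_product']
    exact sum_congr rfl fun q _ => exp_mul_conj_exp _ _ α
  apply ofReal_injective
  rw [← intervalIntegral.integral_ofReal, intervalIntegral.integral_congr fun α _ => hexpand α,
    intervalIntegral.integral_finsetSum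
      fun q _ => (by fun_prop : Continuous _).intervalIntegrable _ _]
  simp_rw [integral_exp_two_pi_I_mul_int, sub_eq_zero, sum_boole]
  simp

section Energy

variable {ι κ β : Type*} [DecidableEq κ] [DecidableEq β]

theorem card_filter_eq_eq_sum_sq (s : Finset ι) (f : ι → κ) :
    #((s ×ˢ s).filter fun q => f q.1 = f q.2)
      = ∑ v ∈ s.image f, #(s.filter fun t => f t = v) ^ 2 := by
  rw [card_eq_sum_card_fiberwise (f := fun q => f q.1) (t := s.image f)
    fun q hq => mem_image_of_mem f (mem_product.mp (mem_filter.mp hq).1).1]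
  refine sum_congr rfl fun v _ => ?_
  rw [sq, ← card_product]
  congr 1
  ext q
  simp only [mem_filter, mem_product]
  grind

theorem card_filter_comp_eq_le (s : Finset ι) (f : ι → κ) (g : κ → β) {D : ℝ}
    (hD : ∀ t ∈ s, (#((s.image f).filter fun v => g v = g (f t)) : ℝ) ≤ D) :
    (#((s ×ˢ s).filter fun q => g (f q.1) = g (f q.2)) : ℝ)
      ≤ D * #((s ×ˢ s).filter fun q => f q.1 = f q.2) := by
  have hfiber (n : β) : #(s.filter fun t => g (f t) = n)
      = ∑ v ∈ (s.image f).filter (fun v => g v = n), #(s.filter fun t => f t = v) := by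
    rw [card_eq_sum_card_fiberwise (f := f) (t := (s.image f).filter (fun v => g v = n))
      fun t ht => by grind]
    refine sum_congr rfl fun v hv => ?_
    rw [filter_filter]
    congr 1
    ext t
    grind
  have hmaps : ∀ v ∈ s.image f, g v ∈ s.image (fun t => g (f t)) := by grind
  rw [card_filter_eq_eq_sum_sq s (fun t => g (f t)), card_filter_eq_eq_sum_sq s f, Nat.cast_sum,
    Nat.cast_sum, ← sum_fiberwise_of_maps_to hmaps, mul_sum]
  refine sum_le_sum fun n hn => ?_
  obtain ⟨t, ht, rfl⟩ := mem_image.mp hn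
  rw [hfiber, Nat.cast_pow, Nat.cast_sum]
  refine sq_sum_le_card_mul_sum_sq.trans ?_
  push_cast
  exact mul_le_mul_of_nonneg_right (hD t ht) (sum_nonneg fun _ _ => sq_nonneg _)

end Energy

theorem card_filter_mul_eq_le_card_divisors (V : Finset (ℤ × ℤ)) {n : ℤ} (hn : n ≠ 0) :
    #(V.filter fun v => v.1 * v.2 = n) ≤ #n.divisors := by
  refine card_le_card_of_injOn Prod.fst (fun v hv => ?_) fun v hv w hw hvw => ?_
  · have hv := (mem_filter.mp hv).2
    exact Int.mem_divisors.mpr ⟨⟨v.2, hv.symm⟩, hn⟩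
  · have hv := (mem_filter.mp hv).2
    have hw := (mem_filter.mp hw).2
    have hv1 : v.1 ≠ 0 := left_ne_zero_of_mul (hv ▸ hn)
    refine Prod.ext hvw (mul_left_cancel₀ hv1 ?_)
    rw [hv, ← hw, ← hvw]

theorem Int.card_Icc_neg_self (P : ℕ) : #(Icc (-(P : ℤ)) P) = 2 * P + 1 := by
  rw [Int.card_Icc]; omega

theorem card_filter_sq_eq_sq_le (P : ℕ) :
    #((Icc (-(P : ℤ)) P ×ˢ Icc (-(P : ℤ)) P).filter fun p => p.1 ^ 2 = p.2 ^ 2)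
      ≤ 2 * (2 * P + 1) := by
  have hsub : (Icc (-(P : ℤ)) P ×ˢ Icc (-(P : ℤ)) P).filter (fun p => p.1 ^ 2 = p.2 ^ 2)
      ⊆ (Icc (-(P : ℤ)) P).image (fun z => (z, z))
        ∪ (Icc (-(P : ℤ)) P).image (fun z => (-z, z)) := by
    intro p hp
    obtain ⟨hp, hsq⟩ := mem_filter.mp hp
    rcases sq_eq_sq_iff_eq_or_eq_neg.mp hsq with h | h
    · exact mem_union_left _ (mem_image.mpr ⟨p.2, (mem_product.mp hp).2, by ext <;> simp [h]⟩)
    · exact mem_union_right _ (mem_image.mpr ⟨p.2, (mem_product.mp hp).2, by ext <;> simp [h]⟩)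
  calc _ ≤ _ := card_le_card hsub
    _ ≤ _ := card_union_le _ _
    _ ≤ #(Icc (-(P : ℤ)) P) + #(Icc (-(P : ℤ)) P) := add_le_add card_image_le card_image_le
    _ = 2 * (2 * P + 1) := by rw [Int.card_Icc_neg_self]; ring

theorem abs_sq_sub_sq_le {P : ℕ} {a b : ℤ} (ha : a ∈ Icc (-(P : ℤ)) P)
    (hb : b ∈ Icc (-(P : ℤ)) P) :
    |((a ^ 2 - b ^ 2 : ℤ) : ℝ)| ≤ (2 * P + 1) ^ 2 := by
  obtain ⟨ha₁, ha₂⟩ := mem_Icc.mp ha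
  obtain ⟨hb₁, hb₂⟩ := mem_Icc.mp hb
  have : (-(P : ℝ)) ≤ a := by exact_mod_cast ha₁
  have : (a : ℝ) ≤ P := by exact_mod_cast ha₂
  have : (-(P : ℝ)) ≤ b := by exact_mod_cast hb₁
  have : (b : ℝ) ≤ P := by exact_mod_cast hb₂
  push_cast
  rw [abs_le]
  constructor <;> nlinarith

theorem abs_mul_mul_add_sq_le {P : ℕ} {x y z : ℤ} (hx : x ∈ Icc (-(P : ℤ)) P)
    (hy : y ∈ Icc (-(P : ℤ)) P) (hz : z ∈ Icc (-(P : ℤ)) P) :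
    |((x * (x * y + z ^ 2) : ℤ) : ℝ)| ≤ (2 * P + 1) ^ 3 := by
  have habs {a : ℤ} (ha : a ∈ Icc (-(P : ℤ)) P) : |(a : ℝ)| ≤ P := by
    rw [← Int.cast_abs, ← Int.cast_natCast]
    exact_mod_cast abs_le.mpr (mem_Icc.mp ha)
  have hu : |(x * y + z ^ 2 : ℝ)| ≤ 2 * P ^ 2 := by
    refine (abs_add_le _ _).trans ?_
    rw [abs_mul, abs_pow]
    nlinarith [habs hx, habs hy, habs hz, abs_nonneg (x : ℝ), abs_nonneg (z : ℝ)]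
  push_cast
  rw [abs_mul]
  calc |(x : ℝ)| * |(x * y + z ^ 2 : ℝ)| ≤ P * (2 * P ^ 2) :=
        mul_le_mul (habs hx) hu (abs_nonneg _) (by positivity)
    _ ≤ (2 * P + 1) ^ 3 := by nlinarith [(P.cast_nonneg : (0 : ℝ) ≤ P)]

def cubicFactors (t : ℤ × ℤ × ℤ) : ℤ × ℤ := (t.1, t.1 * t.2.1 + t.2.2 ^ 2)

noncomputable def cubicSupport (P : ℕ) : Finset (ℤ × ℤ × ℤ) :=
  (Icc (-(P : ℤ)) P ×ˢ Icc (-(P : ℤ)) P ×ˢ Icc (-(P : ℤ)) P).filter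
    fun t => t.1 * (t.1 * t.2.1 + t.2.2 ^ 2) ≠ 0

/-- A pair `(x, y, z), (x, y', z')` with equal `cubicFactors` is determined by `(z, z')` and
`(x, y)`, where `x ∣ z ^ 2 - z' ^ 2 = x (y' - y)`. -/
theorem card_filter_cubicFactors_eq_le (P : ℕ) :
    #((cubicSupport P ×ˢ cubicSupport P).filter fun q => cubicFactors q.1 = cubicFactors q.2)
      ≤ (2 * P + 1) * ∑ p ∈ Icc (-(P : ℤ)) P ×ˢ Icc (-(P : ℤ)) P,
          #((Icc (-(P : ℤ)) P).filter fun x => x ≠ 0 ∧ x ∣ p.1 ^ 2 - p.2 ^ 2) := by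
  set box := Icc (-(P : ℤ)) P
  calc _ ≤ #((box ×ˢ box).sigma
        fun p => (box.filter fun x => x ≠ 0 ∧ x ∣ p.1 ^ 2 - p.2 ^ 2) ×ˢ box) := by
        refine card_le_card_of_injOn (fun q => ⟨(q.1.2.2, q.2.2.2), (q.1.1, q.1.2.1)⟩) ?_ ?_
        · rintro ⟨⟨x, y, z⟩, ⟨x', y', z'⟩⟩ hq
          simp only [cubicSupport, cubicFactors, mem_coe, mem_filter,
            mem_product, Prod.mk.injEq] at hq
          obtain ⟨⟨⟨⟨hx, hy, hz⟩, hF⟩, ⟨_, _, hz'⟩, _⟩, rfl, hu⟩ := hq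
          simp only [coe_sigma, Set.mem_sigma_iff, coe_product, Set.mem_prod, mem_coe, mem_filter]
          exact ⟨⟨hz, hz'⟩, ⟨hx, left_ne_zero_of_mul hF, y' - y, by linear_combination hu⟩, hy⟩
        · rintro ⟨⟨x₁, y₁, z₁⟩, ⟨x₁', y₁', z₁'⟩⟩ hq₁ ⟨⟨x₂, y₂, z₂⟩, ⟨x₂', y₂', z₂'⟩⟩ hq₂ h
          simp only [cubicSupport, cubicFactors, mem_coe, mem_filter,
            mem_product, Prod.mk.injEq] at hq₁ hq₂
          simp only [Sigma.mk.injEq, Prod.mk.injEq, heq_eq_eq] at h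
          obtain ⟨⟨rfl, rfl⟩, rfl, rfl⟩ := h
          obtain ⟨⟨⟨_, hF⟩, _⟩, rfl, hu₁⟩ := hq₁
          obtain ⟨-, rfl, hu₂⟩ := hq₂
          have hx : x₁ ≠ 0 := left_ne_zero_of_mul hF
          have hy : y₁' = y₂' := mul_left_cancel₀ hx (by linear_combination hu₂ - hu₁)
          rw [hy]
    _ = _ := by
        simp only [card_sigma, card_product, Int.card_Icc_neg_self, box, mul_sum, mul_comm]

section DivisorBound

variable {C δ : ℝ} (hC : 0 ≤ C) (hδ : 0 ≤ δ)
  (hdiv : ∀ m : ℤ, m ≠ 0 → (#m.divisors : ℝ) ≤ C * |(m : ℝ)| ^ δ)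
include hC hδ hdiv

theorem sum_card_filter_dvd_sq_sub_sq_le (P : ℕ) :
    (∑ p ∈ Icc (-(P : ℤ)) P ×ˢ Icc (-(P : ℤ)) P,
        #((Icc (-(P : ℤ)) P).filter fun x => x ≠ 0 ∧ x ∣ p.1 ^ 2 - p.2 ^ 2) : ℝ)
      ≤ (2 * P + 1) ^ 2 * (2 + C * ((2 * P + 1) ^ 2) ^ δ) := by
  set Q : ℝ := 2 * P + 1
  have hterm : ∀ p ∈ Icc (-(P : ℤ)) P ×ˢ Icc (-(P : ℤ)) P,
      (#((Icc (-(P : ℤ)) P).filter fun x => x ≠ 0 ∧ x ∣ p.1 ^ 2 - p.2 ^ 2) : ℝ)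
        ≤ Q * (if p.1 ^ 2 = p.2 ^ 2 then 1 else 0) + C * (Q ^ 2) ^ δ := by
    intro p hp
    split_ifs with hsq
    · have hcard : (#((Icc (-(P : ℤ)) P).filter
          fun x => x ≠ 0 ∧ x ∣ p.1 ^ 2 - p.2 ^ 2) : ℝ) ≤ Q := by
        have := card_filter_le (Icc (-(P : ℤ)) P) fun x => x ≠ 0 ∧ x ∣ p.1 ^ 2 - p.2 ^ 2
        rw [Int.card_Icc_neg_self] at this
        simp only [Q]
        exact_mod_cast this
      have : 0 ≤ C * (Q ^ 2) ^ δ := mul_nonneg hC (by positivity)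
      linarith
    · have hm : p.1 ^ 2 - p.2 ^ 2 ≠ 0 := sub_ne_zero.mpr hsq
      have hsub : (Icc (-(P : ℤ)) P).filter (fun x => x ≠ 0 ∧ x ∣ p.1 ^ 2 - p.2 ^ 2)
          ⊆ (p.1 ^ 2 - p.2 ^ 2).divisors := fun x hx =>
        Int.mem_divisors.mpr ⟨(mem_filter.mp hx).2.2, hm⟩
      rw [mul_zero, zero_add]
      calc _ ≤ (#(p.1 ^ 2 - p.2 ^ 2).divisors : ℝ) := by exact_mod_cast card_le_card hsub
        _ ≤ C * |((p.1 ^ 2 - p.2 ^ 2 : ℤ) : ℝ)| ^ δ := hdiv _ hm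
        _ ≤ C * (Q ^ 2) ^ δ := by
            gcongr
            exact abs_sq_sub_sq_le (mem_product.mp hp).1 (mem_product.mp hp).2
  have hdiag : (#((Icc (-(P : ℤ)) P ×ˢ Icc (-(P : ℤ)) P).filter fun p => p.1 ^ 2 = p.2 ^ 2) : ℝ)
      ≤ 2 * Q := by
    simp only [Q]
    exact_mod_cast card_filter_sq_eq_sq_le P
  calc _ ≤ ∑ p ∈ Icc (-(P : ℤ)) P ×ˢ Icc (-(P : ℤ)) P,
        (Q * (if p.1 ^ 2 = p.2 ^ 2 then 1 else 0) + C * (Q ^ 2) ^ δ) := sum_le_sum hterm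
    _ = Q * #((Icc (-(P : ℤ)) P ×ˢ Icc (-(P : ℤ)) P).filter fun p => p.1 ^ 2 = p.2 ^ 2)
        + Q ^ 2 * (C * (Q ^ 2) ^ δ) := by
      rw [sum_add_distrib, ← mul_sum, sum_boole, sum_const, card_product, Int.card_Icc_neg_self,
        nsmul_eq_mul]
      push_cast
      ring
    _ ≤ Q * (2 * Q) + Q ^ 2 * (C * (Q ^ 2) ^ δ) := by gcongr
    _ = Q ^ 2 * (2 + C * (Q ^ 2) ^ δ) := by ring

theorem card_filter_mul_eq_cubicFactors_le (P : ℕ) {t : ℤ × ℤ × ℤ} (ht : t ∈ cubicSupport P) :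
    (#(((cubicSupport P).image cubicFactors).filter
        fun v => v.1 * v.2 = (cubicFactors t).1 * (cubicFactors t).2) : ℝ)
      ≤ C * ((2 * P + 1) ^ 3) ^ δ := by
  obtain ⟨hbox, hF⟩ := mem_filter.mp ht
  obtain ⟨hx, hy, hz⟩ := (by simpa only [mem_product] using hbox :
    t.1 ∈ Icc (-(P : ℤ)) P ∧ t.2.1 ∈ Icc (-(P : ℤ)) P ∧ t.2.2 ∈ Icc (-(P : ℤ)) P)
  calc _ ≤ (#(t.1 * (t.1 * t.2.1 + t.2.2 ^ 2)).divisors : ℝ) := by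
        exact_mod_cast card_filter_mul_eq_le_card_divisors _ hF
    _ ≤ C * |((t.1 * (t.1 * t.2.1 + t.2.2 ^ 2) : ℤ) : ℝ)| ^ δ := hdiv _ hF
    _ ≤ C * ((2 * P + 1) ^ 3) ^ δ := by gcongr; exact abs_mul_mul_add_sq_le hx hy hz

theorem card_filter_cubic_eq_le (P : ℕ) :
    (#((cubicSupport P ×ˢ cubicSupport P).filter fun q =>
        q.1.1 * (q.1.1 * q.1.2.1 + q.1.2.2 ^ 2) = q.2.1 * (q.2.1 * q.2.2.1 + q.2.2.2 ^ 2)) : ℝ)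
      ≤ C * (2 + C) * (2 * P + 1) ^ (3 + 5 * δ) := by
  set Q : ℝ := 2 * P + 1
  have hQ : 1 ≤ Q := by simp only [Q]; linarith [(P.cast_nonneg : (0 : ℝ) ≤ P)]
  have hQ0 : 0 < Q := by linarith
  have hpairs : (#((cubicSupport P ×ˢ cubicSupport P).filter
      fun q => cubicFactors q.1 = cubicFactors q.2) : ℝ)
        ≤ Q * (Q ^ 2 * (2 + C * (Q ^ 2) ^ δ)) := by
    calc _ ≤ Q * ∑ p ∈ Icc (-(P : ℤ)) P ×ˢ Icc (-(P : ℤ)) P,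
          (#((Icc (-(P : ℤ)) P).filter fun x => x ≠ 0 ∧ x ∣ p.1 ^ 2 - p.2 ^ 2) : ℝ) := by
          simp only [Q]
          exact_mod_cast card_filter_cubicFactors_eq_le P
      _ ≤ _ := by gcongr; exact sum_card_filter_dvd_sq_sub_sq_le hC hδ hdiv P
  have h1 : 1 ≤ (Q ^ 2) ^ δ := Real.one_le_rpow (one_le_pow₀ hQ) hδ
  calc _ ≤ C * (Q ^ 3) ^ δ * #((cubicSupport P ×ˢ cubicSupport P).filter
        fun q => cubicFactors q.1 = cubicFactors q.2) :=
        card_filter_comp_eq_le _ cubicFactors (fun v => v.1 * v.2)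
          fun t ht => card_filter_mul_eq_cubicFactors_le hC hδ hdiv P ht
    _ ≤ C * (Q ^ 3) ^ δ * (Q * (Q ^ 2 * ((2 + C) * (Q ^ 2) ^ δ))) := by
        gcongr
        refine hpairs.trans ?_
        gcongr
        nlinarith
    _ = C * (2 + C) * Q ^ (3 + 5 * δ) := by
        rw [← Real.rpow_natCast_mul hQ0.le, ← Real.rpow_natCast_mul hQ0.le,
          show (3 : ℝ) + 5 * δ = ((3 : ℕ) : ℝ) + ((3 : ℕ) * δ + (2 : ℕ) * δ) by push_cast; ring,
          Real.rpow_add hQ0, Real.rpow_add hQ0, Real.rpow_natCast]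
        ring

end DivisorBound

/-- With `F₁(α) = ∑ e(α x(xy+z²))` over triples in `[-P,P]³` with `x(xy+z²) ≠ 0`,
one has `∫₀¹ |F₁(α)|² dα ≪ P^(3+ε)`. -/
theorem mean_square_of_F1 :
    ∀ ε : ℝ, 0 < ε → ∃ C : ℝ, 0 < C ∧ ∀ P : ℕ, 1 ≤ P →
      (∫ α in (0 : ℝ)..1,
          ‖(Finset.filter
              (fun t : ℤ × ℤ × ℤ => t.1 * (t.1 * t.2.1 + t.2.2 ^ 2) ≠ 0)
              (Finset.Icc (-(P : ℤ)) P ×ˢ Finset.Icc (-(P : ℤ)) P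
                ×ˢ Finset.Icc (-(P : ℤ)) P)).sum
            (fun t : ℤ × ℤ × ℤ =>
              Complex.exp (2 * Real.pi * Complex.I * α *
                ((t.1 * (t.1 * t.2.1 + t.2.2 ^ 2) : ℤ) : ℂ)))‖ ^ 2)
        ≤ C * (P : ℝ) ^ ((3 : ℝ) + ε) := by
  intro ε hε
  obtain ⟨C, hC, hdiv⟩ := Int.card_divisors_le_rpow (δ := ε / 5) (by positivity)
  refine ⟨C * (2 + C) * 3 ^ (3 + ε), by positivity, fun P hP => ?_⟩
  have hP' : (1 : ℝ) ≤ P := by exact_mod_cast hP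
  rw [integral_norm_sq_sum_exp]
  calc _ ≤ C * (2 + C) * (2 * P + 1 : ℝ) ^ (3 + 5 * (ε / 5)) :=
        card_filter_cubic_eq_le hC.le (by positivity) hdiv P
    _ ≤ C * (2 + C) * ((3 * P : ℝ) ^ (3 + ε)) := by
        rw [mul_div_cancel₀ ε (by norm_num)]
        gcongr
        linarith
    _ = C * (2 + C) * 3 ^ (3 + ε) * (P : ℝ) ^ (3 + ε) := by
        rw [Real.mul_rpow (by norm_num) (by positivity)]
        ring
end

section
/- Let S(q,a) be exponential sums satisfying: |S(q,a)| ≤ q^{9/4+9/4+2/3+1} · C for q coprime to a fixed integer D (coming from factor bounds q^{9/4}, q^{9/4}, q^{2/3}, q), and |S(q,a)| ≤ C·q^{5/2+5/2+2/3+1} in general. Then the singular series 𝔖(N) = ∑_{q≥1} q^{-7} ∑_{a mod q, (a,q)=1} S(q,a) e(−aN/q) converges absolutely, uniformly in N, and its tail beyond Q is O(Q^{−1/3+ε}). -/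
/-!
Split `q = d * s * w`, where `d` is composed of the primes dividing `D`, `s` is squarefree and
coprime to `D`, and `w` is powerful and coprime to `D`. By multiplicativity
`|S(q;N)| = |S(d;N)| |S(s;N)| |S(w;N)|`, and the three factor bounds give `|S(d;N)| ≪ d^(-1/3)`,
`|S(w;N)| ≪ w^(-5/6)` and `|S(s;N)| ≤ ∏_{p ∣ s} C p^(-3/2) ≪ s^(-3/2+δ)`. So for `α < 1/3` the
weight `q^α |S(q;N)|` is bounded, independently of `N`, by a product `a(d) b(s) c(w)` of summable
functions: the `d` range over an Euler product with finitely many primes, and the powerful numbers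
`w = m² n³` have `∑ w^(-1/2-δ) < ∞`. The tail beyond `Q` is then at most
`Q^(-α) ∑_q q^α |S(q;N)|`.
-/

namespace Nat

def factorPart (P : ℕ → Prop) [DecidablePred P] (n : ℕ) : ℕ :=
  (n.factorization.filter P).prod (· ^ ·)

section factorPart

variable (P R : ℕ → Prop) [DecidablePred P] [DecidablePred R] (n : ℕ)

theorem factorization_factorPart :
    (factorPart P n).factorization = n.factorization.filter P :=
  prod_pow_factorization_eq_self fun _ hp => prime_of_mem_primeFactors (Finset.mem_filter.mp hp).1

theorem factorPart_ne_zero : factorPart P n ≠ 0 :=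
  Finset.prod_ne_zero_iff.mpr fun _ hp =>
    pow_ne_zero _ (prime_of_mem_primeFactors (Finset.mem_filter.mp hp).1).ne_zero

theorem factorPart_mul_factorPart_not (hn : n ≠ 0) :
    factorPart P n * factorPart (fun p => ¬ P p) n = n :=
  (Finsupp.prod_filter_mul_prod_filter_not _ _ _).trans (prod_factorization_pow_eq_self hn)

theorem factorPart_and_mul_factorPart_and_not :
    factorPart (fun p => P p ∧ R p) n * factorPart (fun p => P p ∧ ¬ R p) n = factorPart P n := by
  refine eq_of_factorization_eq (mul_ne_zero (factorPart_ne_zero _ _) (factorPart_ne_zero _ _))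
    (factorPart_ne_zero _ _) fun p => ?_
  simp only [factorization_mul (factorPart_ne_zero _ _) (factorPart_ne_zero _ _),
    Finsupp.add_apply, factorization_factorPart, Finsupp.filter_apply]
  by_cases P p <;> by_cases R p <;> simp [*]

variable {P R n}

theorem factorization_factorPart_of_pos {p : ℕ} (hp : P p) :
    (factorPart P n).factorization p = n.factorization p := by
  rw [factorization_factorPart, Finsupp.filter_apply_pos _ _ hp]

theorem of_prime_dvd_factorPart {p : ℕ} (hp : p.Prime) (h : p ∣ factorPart P n) :
    P p ∧ p ∣ n := by
  have h1 := (hp.dvd_iff_one_le_factorization (factorPart_ne_zero P n)).mp h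
  rw [factorization_factorPart, Finsupp.filter_apply] at h1
  split_ifs at h1 with hP
  · exact ⟨hP, dvd_of_factorization_pos (by omega)⟩
  · omega

theorem coprime_factorPart {m : ℕ} (h : ∀ p, p.Prime → P p → ¬ p ∣ m) :
    Coprime (factorPart P n) m :=
  coprime_of_dvd fun p hp hpd => h p hp (of_prime_dvd_factorPart hp hpd).1

theorem coprime_factorPart_factorPart (h : ∀ p, P p → ¬ R p) (m : ℕ) :
    Coprime (factorPart P m) (factorPart R n) :=
  coprime_factorPart fun p hp hP hdvd => h p hP (of_prime_dvd_factorPart hp hdvd).1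

theorem squarefree_factorPart (h : ∀ p, P p → n.factorization p ≤ 1) :
    Squarefree (factorPart P n) := by
  refine (squarefree_iff_factorization_le_one (factorPart_ne_zero P n)).mpr fun p => ?_
  rw [factorization_factorPart, Finsupp.filter_apply]
  split_ifs with hP
  exacts [h p hP, zero_le_one]

theorem factorPart_mem_factoredNumbers {s : Finset ℕ} (h : ∀ p, p.Prime → P p → p ∈ s) :
    factorPart P n ∈ factoredNumbers s :=
  mem_factoredNumbers_of_primeFactors_subset (factorPart_ne_zero P n) fun p hp =>
    h p (prime_of_mem_primeFactors hp)
      (of_prime_dvd_factorPart (prime_of_mem_primeFactors hp) (dvd_of_mem_primeFactors hp)).1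

end factorPart

def Powerful (n : ℕ) : Prop := ∀ p ∈ n.primeFactors, 2 ≤ n.factorization p

theorem powerful_factorPart {P : ℕ → Prop} [DecidablePred P] {n : ℕ}
    (h : ∀ p, P p → n.factorization p ≠ 1) : (factorPart P n).Powerful := by
  intro p hp
  have hP := (of_prime_dvd_factorPart (prime_of_mem_primeFactors hp)
    (dvd_of_mem_primeFactors hp)).1
  have hpos : (factorPart P n).factorization p ≠ 0 :=
    Finsupp.mem_support_iff.mp (support_factorization _ ▸ hp)
  rw [factorization_factorPart_of_pos hP] at hpos ⊢
  have := h p hP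
  omega

theorem Powerful.exists_sq_mul_cube {n : ℕ} (hn : n.Powerful) : ∃ a b, a ^ 2 * b ^ 3 = n := by
  rcases eq_or_ne n 0 with rfl | hn0
  · exact ⟨0, 0, rfl⟩
  refine ⟨∏ p ∈ n.primeFactors, p ^ (n.factorization p / 2 - n.factorization p % 2),
    ∏ p ∈ n.primeFactors, p ^ (n.factorization p % 2), ?_⟩
  rw [← Finset.prod_pow, ← Finset.prod_pow, ← Finset.prod_mul_distrib]
  refine (Finset.prod_congr rfl fun p hp => ?_).trans (prod_factorization_pow_eq_self hn0)
  rw [← pow_mul, ← pow_mul, ← pow_add]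
  have := hn p hp
  congr 1
  omega

section Parts

variable (D n : ℕ)

def smoothPart : ℕ := factorPart (· ∣ D) n

def simplePart : ℕ := factorPart (fun p => ¬ p ∣ D ∧ n.factorization p = 1) n

def powerfulPart : ℕ := factorPart (fun p => ¬ p ∣ D ∧ ¬ n.factorization p = 1) n

variable {D n}

theorem smoothPart_mul_simplePart_mul_powerfulPart (hn : n ≠ 0) :
    smoothPart D n * simplePart D n * powerfulPart D n = n := by
  rw [mul_assoc, simplePart, powerfulPart, factorPart_and_mul_factorPart_and_not, smoothPart,
    factorPart_mul_factorPart_not _ _ hn]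

theorem coprime_smoothPart_simplePart : Coprime (smoothPart D n) (simplePart D n) :=
  coprime_factorPart_factorPart (fun _ h h' => h'.1 h) _

theorem coprime_smoothPart_mul_simplePart_powerfulPart :
    Coprime (smoothPart D n * simplePart D n) (powerfulPart D n) :=
  .mul_left (coprime_factorPart_factorPart (fun _ h h' => h'.1 h) _)
    (coprime_factorPart_factorPart (fun _ h h' => h'.2 h.2) _)

theorem smoothPart_mem_factoredNumbers (hD : D ≠ 0) :
    smoothPart D n ∈ factoredNumbers D.primeFactors :=
  factorPart_mem_factoredNumbers fun _ hp hpD => mem_primeFactors.mpr ⟨hp, hpD, hD⟩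

theorem squarefree_simplePart : Squarefree (simplePart D n) :=
  squarefree_factorPart fun _ h => h.2.le

theorem coprime_simplePart : Coprime (simplePart D n) D :=
  coprime_factorPart fun _ _ h => h.1

theorem powerful_powerfulPart : (powerfulPart D n).Powerful :=
  powerful_factorPart fun _ h => h.2

theorem coprime_powerfulPart : Coprime (powerfulPart D n) D :=
  coprime_factorPart fun _ _ h => h.1

theorem summable_comp_parts (D : ℕ) {a b c : ℕ → ℝ} (ha : Summable a) (hb : Summable b)
    (hc : Summable c) (ha₀ : 0 ≤ a) (hb₀ : 0 ≤ b) (hc₀ : 0 ≤ c) :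
    Summable fun n => a (smoothPart D n) * (b (simplePart D n) * c (powerfulPart D n)) := by
  -- `0` has the same (trivial) parts as `1`, so injectivity only holds after the shift
  have hinj : Function.Injective fun n =>
      (smoothPart D (n + 1), simplePart D (n + 1), powerfulPart D (n + 1)) := fun m n h => by
    simp only [Prod.mk.injEq] at h
    have hmn : m + 1 = n + 1 := by
      rw [← smoothPart_mul_simplePart_mul_powerfulPart m.add_one_ne_zero,
        ← smoothPart_mul_simplePart_mul_powerfulPart n.add_one_ne_zero, h.1, h.2.1, h.2.2]
    omega
  have habc : Summable fun x : ℕ × ℕ × ℕ => a x.1 * (b x.2.1 * c x.2.2) :=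
    ha.mul_of_nonneg (hb.mul_of_nonneg hc hb₀ hc₀) ha₀ fun _ => mul_nonneg (hb₀ _) (hc₀ _)
  exact (summable_nat_add_iff 1).mp ((habc.comp_injective hinj).congr fun _ => rfl)

end Parts

end Nat

open Nat

theorem summable_indicator_factoredNumbers_rpow (s : Finset ℕ) {e : ℝ} (he : e < 0) :
    Summable ((factoredNumbers s).indicator fun n : ℕ => (n : ℝ) ^ e) := by
  have hnonneg (n : ℕ) : 0 ≤ (n : ℝ) ^ e := Real.rpow_nonneg n.cast_nonneg e
  let f : ℕ →* ℝ :=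
    { toFun n := (n : ℝ) ^ e
      map_one' := by simp
      map_mul' m n := by push_cast; exact Real.mul_rpow m.cast_nonneg n.cast_nonneg }
  have hf {p : ℕ} (hp : p.Prime) : ‖f p‖ < 1 := by
    change ‖(p : ℝ) ^ e‖ < 1
    rw [Real.norm_of_nonneg (hnonneg p)]
    exact Real.rpow_lt_one_of_one_lt_of_neg (by exact_mod_cast hp.one_lt) he
  have := (EulerProduct.summable_and_hasSum_factoredNumbers_prod_filter_prime_geometric hf s).1
  exact summable_subtype_iff_indicator.mp (this.congr fun n => Real.norm_of_nonneg (hnonneg n))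

theorem summable_indicator_powerful_rpow {e : ℝ} (he : e < -(1 / 2)) :
    Summable ({n | n.Powerful}.indicator fun n : ℕ => (n : ℝ) ^ e) := by
  rw [← summable_subtype_iff_indicator]
  choose a b hab using fun n : {n : ℕ // n.Powerful} => n.2.exists_sq_mul_cube
  have hinj : Function.Injective fun n => (a n, b n) := fun m n h => by
    simp only [Prod.mk.injEq] at h
    exact Subtype.ext ((hab m).symm.trans (h.1 ▸ h.2 ▸ hab n))
  have hsum : Summable fun x : ℕ × ℕ => (x.1 : ℝ) ^ (2 * e) * (x.2 : ℝ) ^ (3 * e) :=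
    .mul_of_nonneg (Real.summable_nat_rpow.mpr (by linarith))
      (Real.summable_nat_rpow.mpr (by linarith)) (fun _ => by positivity) (fun _ => by positivity)
  refine (hsum.comp_injective hinj).congr fun n => ?_
  have hn : (n : ℝ) = (a n : ℝ) ^ 2 * (b n : ℝ) ^ 3 := by exact_mod_cast (hab n).symm
  change (a n : ℝ) ^ (2 * e) * (b n : ℝ) ^ (3 * e) = ((n : ℕ) : ℝ) ^ e
  rw [hn, Real.mul_rpow (by positivity) (by positivity),
    ← Real.rpow_natCast_mul (Nat.cast_nonneg _), ← Real.rpow_natCast_mul (Nat.cast_nonneg _)]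
  norm_num

theorem exists_pow_card_primeFactors_le_rpow {c δ : ℝ} (hc : 0 ≤ c) (hδ : 0 < δ) :
    ∃ K, ∀ n : ℕ, n ≠ 0 → c ^ n.primeFactors.card ≤ K * (n : ℝ) ^ δ := by
  set M := max 1 c
  set P₀ := ⌈c ^ δ⁻¹⌉₊
  -- `c ≤ p ^ δ` as soon as `p > P₀`, so only the primes up to `P₀` cost a factor `M`
  have hlocal (p : ℕ) (hp : p.Prime) : c ≤ (if p ≤ P₀ then M else 1) * (p : ℝ) ^ δ := by
    have hp1 : (1 : ℝ) ≤ p := by exact_mod_cast hp.one_le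
    split_ifs with hpP
    · exact (le_max_right 1 c).trans
        (le_mul_of_one_le_right (by positivity) (Real.one_le_rpow hp1 hδ.le))
    · rw [one_mul, ← Real.rpow_inv_rpow hc hδ.ne']
      gcongr
      exact (Nat.le_ceil _).trans (by exact_mod_cast (not_le.mp hpP).le)
  refine ⟨M ^ (P₀ + 1), fun n hn => ?_⟩
  calc c ^ n.primeFactors.card = ∏ p ∈ n.primeFactors, c := (Finset.prod_const c).symm
    _ ≤ ∏ p ∈ n.primeFactors, (if p ≤ P₀ then M else 1) * (p : ℝ) ^ δ :=
      Finset.prod_le_prod (fun _ _ => hc) fun p hp => hlocal p (prime_of_mem_primeFactors hp)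
    _ = M ^ (n.primeFactors.filter (· ≤ P₀)).card * (∏ p ∈ n.primeFactors, (p : ℝ)) ^ δ := by
      rw [Finset.prod_mul_distrib, Finset.prod_ite, Finset.prod_const, Finset.prod_const_one,
        mul_one, Real.finsetProd_rpow _ _ fun _ _ => Nat.cast_nonneg _]
    _ ≤ M ^ (P₀ + 1) * (n : ℝ) ^ δ := by
      gcongr
      · exact le_max_left 1 c
      · exact (Finset.card_le_card fun p hp => Finset.mem_range.mpr
          (Nat.lt_succ_of_le (Finset.mem_filter.mp hp).2)).trans (Finset.card_range _).le
      · rw [← Nat.cast_prod]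
        exact_mod_cast Nat.le_of_dvd (Nat.pos_of_ne_zero hn) (prod_primeFactors_dvd n)

theorem rpow_mul_le_mul_rpow_add {x y c e : ℝ} (hx : 0 < x) (α : ℝ) (h : y ≤ c * x ^ e) :
    x ^ α * y ≤ c * x ^ (α + e) := by
  rw [Real.rpow_add hx]
  nlinarith [Real.rpow_pos_of_pos hx α]

section Multiplicative

variable {F : ℕ → ℝ}

theorem apply_one_le_one (hmul : ∀ m n, m.Coprime n → F (m * n) = F m * F n) : F 1 ≤ 1 := by
  have h := hmul 1 1 (coprime_one_left 1)
  rw [one_mul] at h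
  nlinarith

theorem apply_prod_primes_le (hF : ∀ n, 0 ≤ F n)
    (hmul : ∀ m n, m.Coprime n → F (m * n) = F m * F n) {T : Finset ℕ}
    (hT : ∀ p ∈ T, p.Prime) : F (∏ p ∈ T, p) ≤ ∏ p ∈ T, F p := by
  induction T using Finset.induction_on with
  | empty => simpa using apply_one_le_one hmul
  | insert p T hpT ih =>
    have hp := hT p (Finset.mem_insert_self p T)
    have hcop : p.Coprime (∏ q ∈ T, q) := Nat.Coprime.prod_right fun q hq =>
      (Nat.coprime_primes hp (hT q (Finset.mem_insert_of_mem hq))).mpr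
        (ne_of_mem_of_not_mem hq hpT).symm
    rw [Finset.prod_insert hpT, Finset.prod_insert hpT, hmul _ _ hcop]
    exact mul_le_mul_of_nonneg_left (ih fun q hq => hT q (Finset.mem_insert_of_mem hq)) (hF p)

theorem apply_squarefree_le_pow_card_mul_rpow (hF : ∀ n, 0 ≤ F n)
    (hmul : ∀ m n, m.Coprime n → F (m * n) = F m * F n) {s : ℕ} (hs : Squarefree s) {C e : ℝ}
    (hp : ∀ p ∈ s.primeFactors, F p ≤ C * (p : ℝ) ^ e) :
    F s ≤ C ^ s.primeFactors.card * (s : ℝ) ^ e := by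
  have hs' : ∏ p ∈ s.primeFactors, p = s := prod_primeFactors_of_squarefree hs
  calc F s = F (∏ p ∈ s.primeFactors, p) := by rw [hs']
    _ ≤ ∏ p ∈ s.primeFactors, F p :=
        apply_prod_primes_le hF hmul fun _ => prime_of_mem_primeFactors
    _ ≤ ∏ p ∈ s.primeFactors, C * (p : ℝ) ^ e := Finset.prod_le_prod (fun p _ => hF p) hp
    _ = C ^ s.primeFactors.card * (s : ℝ) ^ e := by
        rw [Finset.prod_mul_distrib, Finset.prod_const,
          Real.finsetProd_rpow _ _ fun _ _ => Nat.cast_nonneg _, ← Nat.cast_prod, hs']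

theorem rpow_mul_apply_squarefree_le (hF : ∀ n, 0 ≤ F n)
    (hmul : ∀ m n, m.Coprime n → F (m * n) = F m * F n) {D s : ℕ} (hs : Squarefree s)
    (hsD : s.Coprime D) {C K δ e : ℝ} (hp : ∀ p, p.Prime → ¬ p ∣ D → F p ≤ C * (p : ℝ) ^ e)
    (hK : C ^ s.primeFactors.card ≤ K * (s : ℝ) ^ δ) (α : ℝ) :
    (s : ℝ) ^ α * F s ≤ K * (s : ℝ) ^ (α + (δ + e)) := by
  have hs₀ : (0 : ℝ) < s := by exact_mod_cast Nat.pos_of_ne_zero hs.ne_zero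
  have hpD (p : ℕ) (hp' : p ∈ s.primeFactors) : ¬ p ∣ D :=
    (prime_of_mem_primeFactors hp').coprime_iff_not_dvd.mp
      (hsD.coprime_dvd_left (dvd_of_mem_primeFactors hp'))
  refine rpow_mul_le_mul_rpow_add hs₀ α ?_
  calc F s ≤ C ^ s.primeFactors.card * (s : ℝ) ^ e :=
        apply_squarefree_le_pow_card_mul_rpow hF hmul hs fun p hp' =>
          hp p (prime_of_mem_primeFactors hp') (hpD p hp')
    _ ≤ K * (s : ℝ) ^ δ * (s : ℝ) ^ e := by gcongr
    _ = K * (s : ℝ) ^ (δ + e) := by rw [mul_assoc, ← Real.rpow_add hs₀]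

theorem rpow_mul_apply_eq_mul_parts (hmul : ∀ m n, m.Coprime n → F (m * n) = F m * F n)
    (D : ℕ) {n : ℕ} (hn : n ≠ 0) (α : ℝ) :
    (n : ℝ) ^ α * F n = (smoothPart D n : ℝ) ^ α * F (smoothPart D n) *
      ((simplePart D n : ℝ) ^ α * F (simplePart D n) *
        ((powerfulPart D n : ℝ) ^ α * F (powerfulPart D n))) := by
  conv_lhs => rw [← smoothPart_mul_simplePart_mul_powerfulPart (D := D) hn]
  rw [hmul _ _ coprime_smoothPart_mul_simplePart_powerfulPart,
    hmul _ _ coprime_smoothPart_simplePart, Nat.cast_mul, Nat.cast_mul,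
    Real.mul_rpow (by positivity) (by positivity), Real.mul_rpow (by positivity) (by positivity)]
  ring

end Multiplicative

theorem exists_summable_majorant {D : ℕ} (hD : D ≠ 0) {A B C α e₁ e₂ e₃ : ℝ} (hA : 0 ≤ A)
    (hB : 0 ≤ B) (hC : 0 ≤ C) (he₁ : α + e₁ < 0) (he₂ : α + e₂ < -(1 / 2)) (he₃ : α + e₃ < -1) :
    ∃ g : ℕ → ℝ, 0 ≤ g ∧ Summable g ∧ ∀ F : ℕ → ℝ, (∀ n, 0 ≤ F n) →
      (∀ m n, m.Coprime n → F (m * n) = F m * F n) →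
      (∀ n : ℕ, n ≠ 0 → F n ≤ A * (n : ℝ) ^ e₁) →
      (∀ n : ℕ, n ≠ 0 → n.Coprime D → F n ≤ B * (n : ℝ) ^ e₂) →
      (∀ p, p.Prime → ¬ p ∣ D → F p ≤ C * (p : ℝ) ^ e₃) →
      ∀ n : ℕ, n ≠ 0 → (n : ℝ) ^ α * F n ≤ g n := by
  set δ := -(1 + α + e₃) / 2 with hδ
  obtain ⟨K, hK⟩ := exists_pow_card_primeFactors_le_rpow hC (show 0 < δ by linarith)
  have hK₀ : 0 ≤ K := zero_le_one.trans (by simpa using hK 1 one_ne_zero)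
  set a := fun d =>
    A * (factoredNumbers D.primeFactors).indicator (fun d : ℕ => (d : ℝ) ^ (α + e₁)) d
  set b := fun s : ℕ => K * (s : ℝ) ^ (α + (δ + e₃))
  set c := fun w => B * {w : ℕ | w.Powerful}.indicator (fun w : ℕ => (w : ℝ) ^ (α + e₂)) w
  have ha₀ : 0 ≤ a := fun _ => mul_nonneg hA (Set.indicator_nonneg (fun _ _ => by positivity) _)
  have hb₀ : 0 ≤ b := fun _ => by positivity
  have hc₀ : 0 ≤ c := fun _ => mul_nonneg hB (Set.indicator_nonneg (fun _ _ => by positivity) _)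
  refine ⟨fun n => a (smoothPart D n) * (b (simplePart D n) * c (powerfulPart D n)),
    fun n => mul_nonneg (ha₀ _) (mul_nonneg (hb₀ _) (hc₀ _)),
    summable_comp_parts D ((summable_indicator_factoredNumbers_rpow _ he₁).mul_left A)
      ((Real.summable_nat_rpow.mpr (by linarith)).mul_left K)
      ((summable_indicator_powerful_rpow he₂).mul_left B) ha₀ hb₀ hc₀, ?_⟩
  intro F hF hmul h₁ h₂ h₃ n hn
  set d := smoothPart D n
  set s := simplePart D n
  set w := powerfulPart D n
  have hd : 0 < d := Nat.pos_of_ne_zero (factorPart_ne_zero _ _)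
  have hs : 0 < s := Nat.pos_of_ne_zero (factorPart_ne_zero _ _)
  have hw : 0 < w := Nat.pos_of_ne_zero (factorPart_ne_zero _ _)
  have hbd : (d : ℝ) ^ α * F d ≤ a d := by
    simp only [a]
    rw [Set.indicator_of_mem (smoothPart_mem_factoredNumbers hD)]
    exact rpow_mul_le_mul_rpow_add (by positivity) α (h₁ d hd.ne')
  have hbs : (s : ℝ) ^ α * F s ≤ b s :=
    rpow_mul_apply_squarefree_le hF hmul squarefree_simplePart coprime_simplePart h₃
      (hK s hs.ne') α
  have hbw : (w : ℝ) ^ α * F w ≤ c w := by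
    simp only [c]
    rw [Set.indicator_of_mem (show w ∈ {w : ℕ | w.Powerful} from powerful_powerfulPart)]
    exact rpow_mul_le_mul_rpow_add (by positivity) α (h₂ w hw.ne' coprime_powerfulPart)
  rw [rpow_mul_apply_eq_mul_parts hmul D hn]
  have hw₀ : 0 ≤ (w : ℝ) ^ α * F w := mul_nonneg (by positivity) (hF w)
  exact mul_le_mul hbd (mul_le_mul hbs hbw hw₀ (hb₀ _))
    (mul_nonneg (mul_nonneg (by positivity) (hF s)) hw₀) (ha₀ _)

theorem summable_of_rpow_mul_le {F g : ℕ → ℝ} (hF : ∀ n, 0 ≤ F n) (hg : Summable g) {α : ℝ}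
    (hα : 0 ≤ α) (hFg : ∀ n : ℕ, n ≠ 0 → (n : ℝ) ^ α * F n ≤ g n) : Summable F := by
  refine (summable_nat_add_iff 1).mp (((summable_nat_add_iff 1).mpr hg).of_nonneg_of_le
    (fun n => hF _) fun n => le_trans ?_ (hFg (n + 1) n.add_one_ne_zero))
  exact le_mul_of_one_le_left (hF _) (Real.one_le_rpow (by simp) hα)

theorem tsum_ite_lt_le {F g : ℕ → ℝ} (hF : ∀ n, 0 ≤ F n) (hg₀ : 0 ≤ g) (hg : Summable g)
    {α : ℝ} (hα : 0 ≤ α) (hFg : ∀ n : ℕ, n ≠ 0 → (n : ℝ) ^ α * F n ≤ g n) {Q : ℕ} (hQ : 0 < Q) :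
    ∑' n, (if Q < n then F n else 0) ≤ (Q : ℝ) ^ (-α) * ∑' n, g n := by
  have hle (n : ℕ) : (if Q < n then F n else 0) ≤ (Q : ℝ) ^ (-α) * g n := by
    split_ifs with hn
    · have hn₀ : (0 : ℝ) < n := by exact_mod_cast hQ.trans hn
      calc F n = (n : ℝ) ^ (-α) * ((n : ℝ) ^ α * F n) := by
            rw [← mul_assoc, ← Real.rpow_add hn₀, neg_add_cancel, Real.rpow_zero, one_mul]
        _ ≤ (n : ℝ) ^ (-α) * g n :=
            mul_le_mul_of_nonneg_left (hFg n (by omega)) (by positivity)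
        _ ≤ (Q : ℝ) ^ (-α) * g n := mul_le_mul_of_nonneg_right
            (Real.rpow_le_rpow_of_nonpos (by exact_mod_cast hQ) (by exact_mod_cast hn.le)
              (by linarith)) (hg₀ n)
    · exact mul_nonneg (by positivity) (hg₀ n)
  have htail : Summable fun n => if Q < n then F n else 0 :=
    (hg.mul_left _).of_nonneg_of_le (fun n => by split_ifs; exacts [hF n, le_rfl]) hle
  rw [← tsum_mul_left]
  exact htail.tsum_le_tsum hle (hg.mul_left _)

theorem norm_mul_mul_le_rpow {𝕜 : Type*} [NormedDivisionRing 𝕜] {x y z : 𝕜}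
    {t c₁ c₂ c₃ e₁ e₂ e₃ : ℝ} (ht : 0 < t) (hx : ‖x‖ ≤ c₁ * t ^ e₁) (hy : ‖y‖ ≤ c₂ * t ^ e₂)
    (hz : ‖z‖ ≤ c₃ * t ^ e₃) : ‖x * y * z‖ ≤ c₁ * c₂ * c₃ * t ^ (e₁ + e₂ + e₃) := by
  have hxy : ‖x‖ * ‖y‖ ≤ c₁ * t ^ e₁ * (c₂ * t ^ e₂) :=
    mul_le_mul hx hy (norm_nonneg _) ((norm_nonneg _).trans hx)
  rw [norm_mul, norm_mul, Real.rpow_add ht, Real.rpow_add ht]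
  calc ‖x‖ * ‖y‖ * ‖z‖ ≤ c₁ * t ^ e₁ * (c₂ * t ^ e₂) * (c₃ * t ^ e₃) :=
        mul_le_mul hxy hz (norm_nonneg _) ((mul_nonneg (norm_nonneg _) (norm_nonneg _)).trans hxy)
    _ = c₁ * c₂ * c₃ * (t ^ e₁ * t ^ e₂ * t ^ e₃) := by ring

noncomputable def singularTerm (S : ℕ → ℕ → ℂ) (q : ℕ) (N : ℤ) : ℂ :=
  (q : ℂ) ^ (-(7 : ℤ)) * ∑ a ∈ (Finset.range q).filter (fun a => Nat.Coprime (a + 1) q),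
    S q (a + 1) * Complex.exp (-(2 * Real.pi * Complex.I * ((a : ℂ) + 1) * (N : ℂ)) / (q : ℂ))

theorem norm_singularTerm_le {S : ℕ → ℕ → ℂ} {q : ℕ} (hq : q ≠ 0) (N : ℤ) {c e : ℝ}
    (hS : ∀ a, a.Coprime q → ‖S q a‖ ≤ c * (q : ℝ) ^ e) :
    ‖singularTerm S q N‖ ≤ c * (q : ℝ) ^ (e - 6) := by
  have hq0 : (0 : ℝ) < q := by positivity
  have hc : 0 ≤ c * (q : ℝ) ^ e := (norm_nonneg _).trans (hS 1 (Nat.coprime_one_left q))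
  have hcard : (((Finset.range q).filter fun a => Nat.Coprime (a + 1) q).card : ℝ) ≤ q := by
    exact_mod_cast (Finset.card_filter_le _ _).trans (Finset.card_range q).le
  have hterm : ∀ a ∈ (Finset.range q).filter (fun a => Nat.Coprime (a + 1) q),
      ‖S q (a + 1) * Complex.exp (-(2 * Real.pi * Complex.I * ((a : ℂ) + 1) * (N : ℂ)) / (q : ℂ))‖
        ≤ c * (q : ℝ) ^ e := fun a ha => by
    rw [norm_mul, Complex.norm_exp]
    simpa [Complex.div_re] using hS (a + 1) (Finset.mem_filter.mp ha).2
  rw [singularTerm, norm_mul, norm_zpow, Complex.norm_natCast]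
  calc (q : ℝ) ^ (-(7 : ℤ)) * ‖∑ a ∈ _, _‖ ≤ (q : ℝ) ^ (-(7 : ℤ)) * (q * (c * (q : ℝ) ^ e)) := by
        gcongr
        refine (norm_sum_le _ _).trans ((Finset.sum_le_card_nsmul _ _ _ hterm).trans ?_)
        rw [nsmul_eq_mul]
        gcongr
    _ = c * (q : ℝ) ^ (e - 6) := by
        rw [Real.rpow_sub hq0, zpow_neg, Real.rpow_ofNat]
        field_simp

theorem norm_singularTerm_mul_mul_le {S1 S2 S3 : ℕ → ℕ → ℂ} {q : ℕ} (hq : q ≠ 0) (N : ℤ)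
    {c₁ c₂ c₃ e₁ e₂ e₃ : ℝ} (h₁ : ∀ a, a.Coprime q → ‖S1 q a‖ ≤ c₁ * (q : ℝ) ^ e₁)
    (h₂ : ∀ a, a.Coprime q → ‖S2 q a‖ ≤ c₂ * (q : ℝ) ^ e₂)
    (h₃ : ∀ a, a.Coprime q → ‖S3 q a‖ ≤ c₃ * (q : ℝ) ^ e₃) :
    ‖singularTerm (fun q a => S1 q a * S2 q a * S3 q a) q N‖ ≤
      c₁ * c₂ * c₃ * (q : ℝ) ^ (e₁ + e₂ + e₃ - 6) :=
  norm_singularTerm_le hq N fun a ha =>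
    norm_mul_mul_le_rpow (by positivity) (h₁ a ha) (h₂ a ha) (h₃ a ha)

/-- The singular series `𝔖(N) = ∑_q S(q;N)` converges absolutely, uniformly in `N`,
and its tail beyond `Q` is `O(Q^(−1/3+ε))`, given the factor bounds for the
exponential sums `S₁, S₂, S₃` and multiplicativity of `S(q;N)`. -/
theorem singular_series_tail (D : ℤ) (hD : D ≠ 0)
    (S1 S2 S3 : ℕ → ℕ → ℂ) (SN : ℕ → ℤ → ℂ)
    (hSN : ∀ q : ℕ, ∀ N : ℤ, SN q N = (q : ℂ) ^ (-(7 : ℤ)) *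
      ∑ a ∈ (Finset.range q).filter (fun a => Nat.Coprime (a + 1) q),
        S1 q (a + 1) * S2 q (a + 1) * S3 q (a + 1) *
          Complex.exp (-(2 * Real.pi * Complex.I * ((a : ℂ) + 1) * (N : ℂ)) / (q : ℂ)))
    (hgood : ∀ q a : ℕ, 1 ≤ q → Nat.Coprime q D.natAbs →
      ‖S1 q a‖ ≤ (q : ℝ) ^ ((9 : ℝ) / 4) ∧ ‖S2 q a‖ ≤ (q : ℝ) ^ ((9 : ℝ) / 4))
    (hgen : ∃ C : ℝ, 0 < C ∧ ∀ q a : ℕ, 1 ≤ q →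
      ‖S1 q a‖ ≤ C * (q : ℝ) ^ ((5 : ℝ) / 2) ∧ ‖S2 q a‖ ≤ C * (q : ℝ) ^ ((5 : ℝ) / 2))
    (h3 : ∃ C : ℝ, 0 < C ∧ ∀ q a : ℕ, 1 ≤ q → ‖S3 q a‖ ≤ C * (q : ℝ) ^ ((2 : ℝ) / 3))
    (hprime : ∀ p : ℕ, p.Prime → ¬ (p : ℤ) ∣ D → ∀ a : ℕ, ¬ p ∣ a →
      S1 p a = (p : ℂ) ^ 2 ∧ S2 p a = (p : ℂ) ^ 2)
    (h3p : ∃ C : ℝ, 0 < C ∧ ∀ p : ℕ, p.Prime → ¬ (p : ℤ) ∣ D → ∀ a : ℕ, ¬ p ∣ a →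
      ‖S3 p a‖ ≤ C * (p : ℝ) ^ ((1 : ℝ) / 2))
    (hmult : ∀ q₁ q₂ : ℕ, Nat.Coprime q₁ q₂ → ∀ N : ℤ,
      SN (q₁ * q₂) N = SN q₁ N * SN q₂ N) :
    ∀ ε : ℝ, 0 < ε → ∃ C : ℝ, 0 < C ∧
      (∀ N : ℤ, Summable (fun q : ℕ => ‖SN q N‖)) ∧
      ∀ N : ℤ, ∀ Q : ℕ, 1 ≤ Q →
        (∑' q : ℕ, if Q < q then ‖SN q N‖ else 0) ≤ C * (Q : ℝ) ^ (-(1 : ℝ) / 3 + ε) := by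
  intro ε hε
  obtain ⟨C₁, hC₁, hgen⟩ := hgen
  obtain ⟨C₃, hC₃, h3⟩ := h3
  obtain ⟨C₄, hC₄, h3p⟩ := h3p
  have hSN' : ∀ q N, SN q N = singularTerm (fun q a => S1 q a * S2 q a * S3 q a) q N := hSN
  have hsq (p : ℕ) : ‖(p : ℂ) ^ 2‖ ≤ 1 * (p : ℝ) ^ (2 : ℝ) := by
    rw [one_mul, Real.rpow_two, norm_pow, Complex.norm_natCast]
  set α := max 0 (1 / 3 - ε)
  obtain ⟨g, hg₀, hg, hmaj⟩ := exists_summable_majorant (Int.natAbs_ne_zero.mpr hD)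
    (A := C₁ * C₁ * C₃) (B := 1 * 1 * C₃) (C := 1 * 1 * C₄) (α := α)
    (e₁ := 5 / 2 + 5 / 2 + 2 / 3 - 6) (e₂ := 9 / 4 + 9 / 4 + 2 / 3 - 6) (e₃ := 2 + 2 + 1 / 2 - 6)
    (by positivity) (by positivity) (by positivity) (by norm_num [α]; linarith)
    (by norm_num [α]; linarith) (by norm_num [α]; linarith)
  have hbound (N : ℤ) : ∀ q : ℕ, q ≠ 0 → (q : ℝ) ^ α * ‖SN q N‖ ≤ g q := by
    refine hmaj (‖SN · N‖) (fun _ => norm_nonneg _)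
      (fun m n h => by simp only [hmult m n h, norm_mul])
      (fun q hq => ?_) (fun q hq hqD => ?_) (fun p hp hpD => ?_) <;> rw [hSN']
    · have hq' := one_le_iff_ne_zero.mpr hq
      exact norm_singularTerm_mul_mul_le hq N (fun a _ => (hgen q a hq').1)
        (fun a _ => (hgen q a hq').2) fun a _ => h3 q a hq'
    · have hq' := one_le_iff_ne_zero.mpr hq
      exact norm_singularTerm_mul_mul_le hq N
        (fun a _ => (hgood q a hq' hqD).1.trans_eq (one_mul _).symm)
        (fun a _ => (hgood q a hq' hqD).2.trans_eq (one_mul _).symm) fun a _ => h3 q a hq'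
    · have hpD' : ¬ (p : ℤ) ∣ D := fun h => hpD (Int.natCast_dvd.mp h)
      have hpa (a : ℕ) (ha : a.Coprime p) : ¬ p ∣ a := hp.coprime_iff_not_dvd.mp ha.symm
      exact norm_singularTerm_mul_mul_le hp.ne_zero N
        (fun a ha => (hprime p hp hpD' a (hpa a ha)).1 ▸ hsq p)
        (fun a ha => (hprime p hp hpD' a (hpa a ha)).2 ▸ hsq p)
        fun a ha => h3p p hp hpD' a (hpa a ha)
  have hα : 0 ≤ α := le_max_left _ _
  have hT : 0 ≤ ∑' q, g q := tsum_nonneg hg₀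
  refine ⟨∑' q, g q + 1, by linarith, fun N => summable_of_rpow_mul_le
    (fun _ => norm_nonneg _) hg hα (hbound N), fun N Q hQ => ?_⟩
  refine (tsum_ite_lt_le (fun _ => norm_nonneg _) hg₀ hg hα (hbound N) hQ).trans ?_
  rw [mul_comm]
  refine mul_le_mul (by linarith) (Real.rpow_le_rpow_of_exponent_le (by exact_mod_cast hQ) ?_)
    (by positivity) (by linarith)
  linarith [le_max_right 0 (1 / 3 - ε)]
end
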